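/- arXiv:1612.05685 — 2 statements merged into one kernel-verified Lean document; each statement's English description precedes it below -/
import Mathlib

section
/- Let f be twice differentiable on an open interval containing [m, M] with k ≤ f″(z) ≤ K for all z ∈ [m, M], where K > k ≥ 0. If E[f′(X)] ≠ 0 and t* := E[X·f′(X)]/E[f′(X)] ∈ [m, M], then the Slater type inequalities hold: (K/2)·E[(X − t*)²] ≥ f(t*) − E[f(X)] ≥ (k/2)·E[(X − t*)²]. -/
/-!
The bounds `k ≤ f'' ≤ K` make `f - k/2 x²` and `K/2 x² - f` convex on `[m, M]`, and comparing
each with its tangent line gives `k/2 (t - x)² ≤ f t - f x - f' x (t - x) ≤ K/2 (t - x)²` there.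
Put `x = X`, `t = t*` and take expectations: `t*` is exactly the point at which
`E[f'(X) (t* - X)]` vanishes, so the middle term integrates to `f t* - E[f(X)]`.
-/

open MeasureTheory Set

lemma ConvexOn.add_mul_sub_le_of_hasDerivAt {S : Set ℝ} {f : ℝ → ℝ} {f' x y : ℝ}
    (hfc : ConvexOn ℝ S f) (hx : x ∈ S) (hy : y ∈ S) (hf : HasDerivAt f f' x) :
    f x + f' * (y - x) ≤ f y := by
  rcases lt_trichotomy x y with hxy | rfl | hyx
  · have h := hfc.le_slope_of_hasDerivAt hx hy hxy hf
    rw [slope_def_field, le_div_iff₀ (sub_pos.mpr hxy)] at h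
    linarith
  · simp
  · have h := hfc.slope_le_of_hasDerivAt hy hx hyx hf
    rw [slope_def_field, div_le_iff₀ (sub_pos.mpr hyx)] at h
    linarith

section QuadraticTaylorBounds

variable {D : Set ℝ} {f f' f'' : ℝ → ℝ} {c : ℝ}

lemma HasDerivAt.sub_half_mul_sq {d x : ℝ} (hf : HasDerivAt f d x) :
    HasDerivAt (fun y => f y - c / 2 * y ^ 2) (d - c * x) x :=
  (hf.sub ((hasDerivAt_pow 2 x).const_mul (c / 2))).congr_deriv (by push_cast; ring)

lemma convexOn_sub_half_mul_sq (hD : Convex ℝ D)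
    (hf : ∀ x ∈ D, HasDerivAt f (f' x) x) (hf' : ∀ x ∈ D, HasDerivAt f' (f'' x) x)
    (hc : ∀ x ∈ D, c ≤ f'' x) :
    ConvexOn ℝ D (fun y => f y - c / 2 * y ^ 2) := by
  have hg' : ∀ x ∈ D, HasDerivAt (fun y => f' y - c * y) (f'' x - c) x := fun x hx =>
    ((hf' x hx).sub ((hasDerivAt_id x).const_mul c)).congr_deriv (by simp)
  refine convexOn_of_hasDerivWithinAt2_nonneg hD
    (fun x hx => (hf x hx).sub_half_mul_sq.continuousAt.continuousWithinAt)
    (fun x hx => (hf x (interior_subset hx)).sub_half_mul_sq.hasDerivWithinAt)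
    (fun x hx => (hg' x (interior_subset hx)).hasDerivWithinAt)
    (fun x hx => sub_nonneg.mpr (hc x (interior_subset hx)))

lemma half_mul_sq_le_sub_sub_mul_of_le_deriv2 (hD : Convex ℝ D)
    (hf : ∀ x ∈ D, HasDerivAt f (f' x) x) (hf' : ∀ x ∈ D, HasDerivAt f' (f'' x) x)
    (hc : ∀ x ∈ D, c ≤ f'' x) {x y : ℝ} (hx : x ∈ D) (hy : y ∈ D) :
    c / 2 * (y - x) ^ 2 ≤ f y - f x - f' x * (y - x) := by
  have h := (convexOn_sub_half_mul_sq hD hf hf' hc).add_mul_sub_le_of_hasDerivAt hx hy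
    (hf x hx).sub_half_mul_sq
  linear_combination h

lemma sub_sub_mul_le_half_mul_sq_of_deriv2_le (hD : Convex ℝ D)
    (hf : ∀ x ∈ D, HasDerivAt f (f' x) x) (hf' : ∀ x ∈ D, HasDerivAt f' (f'' x) x)
    (hc : ∀ x ∈ D, f'' x ≤ c) {x y : ℝ} (hx : x ∈ D) (hy : y ∈ D) :
    f y - f x - f' x * (y - x) ≤ c / 2 * (y - x) ^ 2 := by
  have h := half_mul_sq_le_sub_sub_mul_of_le_deriv2 (f := -f) (f' := -f') (f'' := -f'') (c := -c)
    hD (fun x hx => (hf x hx).neg) (fun x hx => (hf' x hx).neg)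
    (fun x hx => neg_le_neg (hc x hx)) hx hy
  simp only [Pi.neg_apply] at h
  linarith

end QuadraticTaylorBounds

section WeightedMean

variable {Ω : Type*} [MeasurableSpace Ω] {μ : Measure Ω} {u v : Ω → ℝ}

lemma integrable_mul_const_sub (hu : Integrable u μ) (hvu : Integrable (fun ω => v ω * u ω) μ)
    (t : ℝ) : Integrable (fun ω => u ω * (t - v ω)) μ :=
  ((hu.const_mul t).sub hvu).congr (.of_forall fun ω => by simp only [Pi.sub_apply]; ring)

lemma integral_mul_sub_div_integral_eq_zero (hu : Integrable u μ)
    (hvu : Integrable (fun ω => v ω * u ω) μ) (hne : ∫ ω, u ω ∂μ ≠ 0) :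
    ∫ ω, u ω * ((∫ ω, v ω * u ω ∂μ) / (∫ ω, u ω ∂μ) - v ω) ∂μ = 0 := by
  set t := (∫ ω, v ω * u ω ∂μ) / (∫ ω, u ω ∂μ)
  calc ∫ ω, u ω * (t - v ω) ∂μ = ∫ ω, t * u ω - v ω * u ω ∂μ :=
        integral_congr_ae (.of_forall fun ω => by ring)
    _ = t * ∫ ω, u ω ∂μ - ∫ ω, v ω * u ω ∂μ := by
        rw [integral_sub (hu.const_mul t) hvu, integral_const_mul]
    _ = 0 := by rw [div_mul_cancel₀ _ hne, sub_self]

lemma integral_const_sub_sub_mul_sub_div_integral [IsProbabilityMeasure μ] {g : Ω → ℝ}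
    (c : ℝ) (hg : Integrable g μ) (hu : Integrable u μ)
    (hvu : Integrable (fun ω => v ω * u ω) μ)
    (hne : ∫ ω, u ω ∂μ ≠ 0) :
    ∫ ω, c - g ω - u ω * ((∫ ω, v ω * u ω ∂μ) / (∫ ω, u ω ∂μ) - v ω) ∂μ =
      c - ∫ ω, g ω ∂μ := by
  have hcg : Integrable (fun ω => c - g ω) μ := (integrable_const c).sub hg
  rw [integral_sub hcg (integrable_mul_const_sub hu hvu _),
    integral_mul_sub_div_integral_eq_zero hu hvu hne, integral_sub (integrable_const c) hg,
    integral_const, probReal_univ, one_smul, sub_zero]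

end WeightedMean

theorem stmt_10_general {Ω : Type*} [MeasurableSpace Ω] (P : Measure Ω) [IsProbabilityMeasure P]
    (X : Ω → ℝ) (m M : ℝ)
    (hX : ∀ᵐ ω ∂P, X ω ∈ Set.Icc m M)
    (hXint : Integrable X P)
    (hX2int : Integrable (fun ω => (X ω) ^ 2) P)
    (f : ℝ → ℝ) (a b : ℝ) (ham : a < m) (hMb : M < b)
    (hdiff1 : ∀ x ∈ Set.Ioo a b, DifferentiableAt ℝ f x)
    (hdiff2 : ∀ x ∈ Set.Ioo a b, DifferentiableAt ℝ (deriv f) x)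
    (k K : ℝ)
    (hbound : ∀ z ∈ Set.Icc m M, k ≤ deriv (deriv f) z ∧ deriv (deriv f) z ≤ K)
    (hfXint : Integrable (fun ω => f (X ω)) P)
    (hdfXint : Integrable (fun ω => deriv f (X ω)) P)
    (hXdfXint : Integrable (fun ω => X ω * deriv f (X ω)) P)
    (hne : (∫ ω, deriv f (X ω) ∂P) ≠ 0)
    (hts : (∫ ω, X ω * deriv f (X ω) ∂P) / (∫ ω, deriv f (X ω) ∂P) ∈ Set.Icc m M) :
    let ts := (∫ ω, X ω * deriv f (X ω) ∂P) / (∫ ω, deriv f (X ω) ∂P)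
    K / 2 * (∫ ω, (X ω - ts) ^ 2 ∂P) ≥ f ts - (∫ ω, f (X ω) ∂P) ∧
    f ts - (∫ ω, f (X ω) ∂P) ≥ k / 2 * (∫ ω, (X ω - ts) ^ 2 ∂P) := by
  intro ts
  have hsub : Icc m M ⊆ Ioo a b := Icc_subset_Ioo ham hMb
  have hf : ∀ x ∈ Icc m M, HasDerivAt f (deriv f x) x :=
    fun x hx => (hdiff1 x (hsub hx)).hasDerivAt
  have hf' : ∀ x ∈ Icc m M, HasDerivAt (deriv f) (deriv (deriv f) x) x :=
    fun x hx => (hdiff2 x (hsub hx)).hasDerivAt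
  have hr_int : Integrable (fun ω => f ts - f (X ω) - deriv f (X ω) * (ts - X ω)) P :=
    ((integrable_const _).sub hfXint).sub (integrable_mul_const_sub hdfXint hXdfXint ts)
  have hsq_int : Integrable (fun ω => (X ω - ts) ^ 2) P :=
    ((hX2int.sub (hXint.const_mul (2 * ts))).add (integrable_const (ts ^ 2))).congr
      (.of_forall fun ω => by simp only [Pi.add_apply, Pi.sub_apply]; ring)
  have hr_integral :=
    integral_const_sub_sub_mul_sub_div_integral (f ts) hfXint hdfXint hXdfXint hne
  constructor
  · rw [ge_iff_le, ← hr_integral, ← integral_const_mul]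
    refine integral_mono_ae hr_int (hsq_int.const_mul _) ?_
    filter_upwards [hX] with ω hω
    linarith [sub_sub_mul_le_half_mul_sq_of_deriv2_le (convex_Icc m M) hf hf'
      (fun z hz => (hbound z hz).2) hω hts]
  · rw [ge_iff_le, ← hr_integral, ← integral_const_mul]
    refine integral_mono_ae (hsq_int.const_mul _) hr_int ?_
    filter_upwards [hX] with ω hω
    linarith [half_mul_sq_le_sub_sub_mul_of_le_deriv2 (convex_Icc m M) hf hf'
      (fun z hz => (hbound z hz).1) hω hts]

theorem stmt_10 {Ω : Type*} [MeasurableSpace Ω] (P : Measure Ω) [IsProbabilityMeasure P]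
    (X : Ω → ℝ) (m M : ℝ) (hmM : m < M)
    (hX : ∀ᵐ ω ∂P, X ω ∈ Set.Icc m M)
    (hXint : Integrable X P)
    (hX2int : Integrable (fun ω => (X ω) ^ 2) P)
    (f : ℝ → ℝ) (a b : ℝ) (ham : a < m) (hMb : M < b)
    (hdiff1 : ∀ x ∈ Set.Ioo a b, DifferentiableAt ℝ f x)
    (hdiff2 : ∀ x ∈ Set.Ioo a b, DifferentiableAt ℝ (deriv f) x)
    (k K : ℝ) (hk : 0 ≤ k) (hkK : k < K)
    (hbound : ∀ z ∈ Set.Icc m M, k ≤ deriv (deriv f) z ∧ deriv (deriv f) z ≤ K)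
    (hfXint : Integrable (fun ω => f (X ω)) P)
    (hdfXint : Integrable (fun ω => deriv f (X ω)) P)
    (hXdfXint : Integrable (fun ω => X ω * deriv f (X ω)) P)
    (hne : (∫ ω, deriv f (X ω) ∂P) ≠ 0)
    (hts : (∫ ω, X ω * deriv f (X ω) ∂P) / (∫ ω, deriv f (X ω) ∂P) ∈ Set.Icc m M) :
    let ts := (∫ ω, X ω * deriv f (X ω) ∂P) / (∫ ω, deriv f (X ω) ∂P)
    K / 2 * (∫ ω, (X ω - ts) ^ 2 ∂P) ≥ f ts - (∫ ω, f (X ω) ∂P) ∧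
    f ts - (∫ ω, f (X ω) ∂P) ≥ k / 2 * (∫ ω, (X ω - ts) ^ 2 ∂P) :=
  stmt_10_general P X m M hX hXint hX2int f a b ham hMb hdiff1 hdiff2 k K hbound hfXint hdfXint
    hXdfXint hne hts
end

section
/- Let f be twice differentiable on an open interval containing [m, M] with k ≤ f″(z) ≤ K for all z ∈ [m, M], where K > k ≥ 0. Then (K/2)·[(M − m)²/12 + E[(X − (m + M)/2)²]] ≥ (1/(M − m))·∫_m^M f(z) dz − E[f(X)] − ((m + M)/2)·E[f′(X)] + E[X·f′(X)] ≥ (k/2)·[(M − m)²/12 + E[(X − (m + M)/2)²]]. -/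
open MeasureTheory Real

/-!
If `k ≤ f'' ≤ K` on `[m, M]`, Taylor's formula gives, for `x, y ∈ [m, M]`,
`k/2 (y - x)² ≤ f y - f x - f' x (y - x) ≤ K/2 (y - x)²`. Averaging over `y ∈ [m, M]` turns this
into `k/2 ((M - m)²/12 + (x - (m + M)/2)²) ≤ (M - m)⁻¹ ∫ f - f x - f' x ((m + M)/2 - x) ≤ K/2 (…)`,
and taking `x = X` and expectations gives the theorem.
-/

theorem ConvexOn.add_deriv_mul_sub_le {S : Set ℝ} {g : ℝ → ℝ} (hg : ConvexOn ℝ S g) {x y : ℝ}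
    (hx : x ∈ S) (hy : y ∈ S) (hd : DifferentiableAt ℝ g x) :
    g x + deriv g x * (y - x) ≤ g y := by
  rcases lt_trichotomy x y with hxy | rfl | hyx
  · have h := hg.deriv_le_slope hx hy hxy hd
    rw [slope_def_field, le_div_iff₀ (sub_pos.2 hxy)] at h
    linarith
  · simp
  · have h := hg.slope_le_deriv hy hx hyx hd
    rw [slope_def_field, div_le_iff₀ (sub_pos.2 hyx)] at h
    linarith

section SecondDerivative

variable {D : Set ℝ} {f : ℝ → ℝ} {k K : ℝ}

theorem deriv_sub_half_mul_sq {x : ℝ} (hf : DifferentiableAt ℝ f x) :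
    deriv (fun z => f z - k / 2 * z ^ 2) x = deriv f x - k * x := by
  rw [deriv_fun_sub hf (by fun_prop), deriv_const_mul _ (by fun_prop)]
  simp only [deriv_pow_field]
  ring

theorem convexOn_sub_half_mul_sq_of_le_deriv2 (hD : Convex ℝ D)
    (hf : ∀ x ∈ D, DifferentiableAt ℝ f x) (hf' : ∀ x ∈ D, DifferentiableAt ℝ (deriv f) x)
    (hk : ∀ x ∈ D, k ≤ deriv (deriv f) x) :
    ConvexOn ℝ D (fun z => f z - k / 2 * z ^ 2) := by
  have hg : ∀ x ∈ D, DifferentiableAt ℝ (fun z => f z - k / 2 * z ^ 2) x :=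
    fun x hx => (hf x hx).sub (by fun_prop)
  have hψ : ∀ x ∈ D, HasDerivAt (fun z => deriv f z - k * z) (deriv (deriv f) x - k) x :=
    fun x hx => by simpa using (hf' x hx).hasDerivAt.fun_sub ((hasDerivAt_id x).const_mul k)
  have hmono : MonotoneOn (fun z => deriv f z - k * z) D :=
    monotoneOn_of_deriv_nonneg hD
      (fun x hx => (hψ x hx).continuousAt.continuousWithinAt)
      (fun x hx => (hψ x (interior_subset hx)).differentiableAt.differentiableWithinAt)
      (fun x hx => by rw [(hψ x (interior_subset hx)).deriv]; linarith [hk x (interior_subset hx)])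
  refine MonotoneOn.convexOn_of_deriv hD (fun x hx => (hg x hx).continuousAt.continuousWithinAt)
    (fun x hx => (hg x (interior_subset hx)).differentiableWithinAt) ?_
  exact (hmono.mono interior_subset).congr
    fun x hx => (deriv_sub_half_mul_sq (hf x (interior_subset hx))).symm

theorem add_deriv_mul_sub_add_sq_le_of_le_deriv2 (hD : Convex ℝ D)
    (hf : ∀ x ∈ D, DifferentiableAt ℝ f x) (hf' : ∀ x ∈ D, DifferentiableAt ℝ (deriv f) x)
    (hk : ∀ x ∈ D, k ≤ deriv (deriv f) x) {x y : ℝ} (hx : x ∈ D) (hy : y ∈ D) :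
    f x + deriv f x * (y - x) + k / 2 * (y - x) ^ 2 ≤ f y := by
  have h := (convexOn_sub_half_mul_sq_of_le_deriv2 hD hf hf' hk).add_deriv_mul_sub_le hx hy
    ((hf x hx).sub (by fun_prop))
  rw [deriv_sub_half_mul_sq (hf x hx)] at h
  linarith

theorem le_add_deriv_mul_sub_add_sq_of_deriv2_le (hD : Convex ℝ D)
    (hf : ∀ x ∈ D, DifferentiableAt ℝ f x) (hf' : ∀ x ∈ D, DifferentiableAt ℝ (deriv f) x)
    (hK : ∀ x ∈ D, deriv (deriv f) x ≤ K) {x y : ℝ} (hx : x ∈ D) (hy : y ∈ D) :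
    f y ≤ f x + deriv f x * (y - x) + K / 2 * (y - x) ^ 2 := by
  have h := add_deriv_mul_sub_add_sq_le_of_le_deriv2 (f := fun z => -f z) (k := -K) hD
    (fun z hz => (hf z hz).neg) (fun z hz => by rw [deriv.fun_neg']; exact (hf' z hz).fun_neg)
    (fun z hz => by simpa only [deriv.fun_neg', neg_le_neg_iff] using hK z hz) hx hy
  simp only [deriv.fun_neg'] at h
  linarith

end SecondDerivative

theorem integral_add_mul_sub_add_mul_sub_sq (a d e x m M : ℝ) :
    ∫ y in m..M, (a + d * (y - x) + e * (y - x) ^ 2) =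
      (M - m) * (a + d * ((m + M) / 2 - x) + e * ((M - m) ^ 2 / 12 + (x - (m + M) / 2) ^ 2)) := by
  rw [intervalIntegral.integral_add, intervalIntegral.integral_add]
  · simp [intervalIntegral.integral_comp_sub_right (fun y => y ^ 2),
      intervalIntegral.integral_comp_sub_right (fun y => y)]
    ring
  all_goals exact Continuous.intervalIntegrable (by fun_prop) _ _

theorem average_sub_tangent_mem_Icc {f : ℝ → ℝ} {k K m M : ℝ} (hmM : m < M)
    (hf : ∀ x ∈ Set.Icc m M, DifferentiableAt ℝ f x)
    (hf' : ∀ x ∈ Set.Icc m M, DifferentiableAt ℝ (deriv f) x)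
    (hbound : ∀ z ∈ Set.Icc m M, k ≤ deriv (deriv f) z ∧ deriv (deriv f) z ≤ K)
    {x : ℝ} (hx : x ∈ Set.Icc m M) :
    1 / (M - m) * (∫ z in m..M, f z) - f x - (m + M) / 2 * deriv f x + x * deriv f x ∈
      Set.Icc (k / 2 * ((M - m) ^ 2 / 12 + (x - (m + M) / 2) ^ 2))
        (K / 2 * ((M - m) ^ 2 / 12 + (x - (m + M) / 2) ^ 2)) := by
  have hMm : 0 < M - m := sub_pos.2 hmM
  have hfint : IntervalIntegrable f volume m M :=
    ContinuousOn.intervalIntegrable_of_Icc hmM.le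
      fun z hz => (hf z hz).continuousAt.continuousWithinAt
  have hpoly (e : ℝ) :
      IntervalIntegrable (fun y => f x + deriv f x * (y - x) + e * (y - x) ^ 2) volume m M :=
    Continuous.intervalIntegrable (by fun_prop) _ _
  have hlower := intervalIntegral.integral_mono_on hmM.le (hpoly _) hfint fun y hy =>
    add_deriv_mul_sub_add_sq_le_of_le_deriv2 (convex_Icc m M) hf hf'
      (fun z hz => (hbound z hz).1) hx hy
  have hupper := intervalIntegral.integral_mono_on hmM.le hfint (hpoly _) fun y hy =>
    le_add_deriv_mul_sub_add_sq_of_deriv2_le (convex_Icc m M) hf hf'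
      (fun z hz => (hbound z hz).2) hx hy
  have havg : ∫ z in m..M, f z = (M - m) * (1 / (M - m) * ∫ z in m..M, f z) := by
    field_simp
  rw [integral_add_mul_sub_add_mul_sub_sq, havg] at hlower hupper
  constructor
  · linarith [le_of_mul_le_mul_left hlower hMm]
  · linarith [le_of_mul_le_mul_left hupper hMm]

theorem stmt_13_general {Ω : Type*} [MeasurableSpace Ω] (P : Measure Ω) [IsProbabilityMeasure P]
    (X : Ω → ℝ) (m M : ℝ) (hmM : m < M)
    (hX : ∀ᵐ ω ∂P, X ω ∈ Set.Icc m M)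
    (hXint : Integrable X P)
    (f : ℝ → ℝ) (a b : ℝ) (ham : a < m) (hMb : M < b)
    (hdiff1 : ∀ x ∈ Set.Ioo a b, DifferentiableAt ℝ f x)
    (hdiff2 : ∀ x ∈ Set.Ioo a b, DifferentiableAt ℝ (deriv f) x)
    (k K : ℝ)
    (hbound : ∀ z ∈ Set.Icc m M, k ≤ deriv (deriv f) z ∧ deriv (deriv f) z ≤ K)
    (hfXint : Integrable (fun ω => f (X ω)) P)
    (hdfXint : Integrable (fun ω => deriv f (X ω)) P)
    (hXdfXint : Integrable (fun ω => X ω * deriv f (X ω)) P)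
     :
    K / 2 * ((M - m) ^ 2 / 12 + (∫ ω, (X ω - (m + M) / 2) ^ 2 ∂P)) ≥
      (1 / (M - m)) * (∫ z in m..M, f z) - (∫ ω, f (X ω) ∂P)
        - ((m + M) / 2) * (∫ ω, deriv f (X ω) ∂P) + (∫ ω, X ω * deriv f (X ω) ∂P) ∧
    (1 / (M - m)) * (∫ z in m..M, f z) - (∫ ω, f (X ω) ∂P)
        - ((m + M) / 2) * (∫ ω, deriv f (X ω) ∂P) + (∫ ω, X ω * deriv f (X ω) ∂P) ≥
      k / 2 * ((M - m) ^ 2 / 12 + (∫ ω, (X ω - (m + M) / 2) ^ 2 ∂P)) := by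
  have hsub : Set.Icc m M ⊆ Set.Ioo a b := Set.Icc_subset_Ioo ham hMb
  have hpointwise := hX.mono fun ω hω => average_sub_tangent_mem_Icc hmM
    (fun x hx => hdiff1 x (hsub hx)) (fun x hx => hdiff2 x (hsub hx)) hbound hω
  have hsq : Integrable (fun ω => (X ω - (m + M) / 2) ^ 2) P := by
    refine .of_mem_Icc 0 ((M - m) ^ 2) (by fun_prop) ?_
    filter_upwards [hX] with ω ⟨hmX, hXM⟩
    exact ⟨by positivity, by nlinarith⟩
  have hmid : Integrable (fun ω => 1 / (M - m) * (∫ z in m..M, f z) - f (X ω)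
      - (m + M) / 2 * deriv f (X ω) + X ω * deriv f (X ω)) P :=
    (((integrable_const _).sub hfXint).sub (hdfXint.const_mul _)).add hXdfXint
  have hbnd (c : ℝ) : Integrable
      (fun ω => c / 2 * ((M - m) ^ 2 / 12 + (X ω - (m + M) / 2) ^ 2)) P :=
    ((integrable_const _).add hsq).const_mul _
  have hmid_eq : ∫ ω, (1 / (M - m) * (∫ z in m..M, f z) - f (X ω)
      - (m + M) / 2 * deriv f (X ω) + X ω * deriv f (X ω)) ∂P =
      1 / (M - m) * (∫ z in m..M, f z) - (∫ ω, f (X ω) ∂P)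
        - (m + M) / 2 * (∫ ω, deriv f (X ω) ∂P) + (∫ ω, X ω * deriv f (X ω) ∂P) := by
    rw [integral_add _ hXdfXint, integral_sub _ (hdfXint.const_mul _),
      integral_sub (integrable_const _) hfXint, integral_const, integral_const_mul]
    · simp
    · exact (integrable_const _).sub hfXint
    · exact ((integrable_const _).sub hfXint).sub (hdfXint.const_mul _)
  have hbnd_eq (c : ℝ) : ∫ ω, c / 2 * ((M - m) ^ 2 / 12 + (X ω - (m + M) / 2) ^ 2) ∂P =
      c / 2 * ((M - m) ^ 2 / 12 + ∫ ω, (X ω - (m + M) / 2) ^ 2 ∂P) := by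
    rw [integral_const_mul, integral_add (integrable_const _) hsq, integral_const]
    simp
  have hlower := integral_mono_ae (hbnd k) hmid (hpointwise.mono fun _ h => h.1)
  have hupper := integral_mono_ae hmid (hbnd K) (hpointwise.mono fun _ h => h.2)
  rw [hmid_eq, hbnd_eq] at hlower hupper
  exact ⟨hupper, hlower⟩

theorem stmt_13 {Ω : Type*} [MeasurableSpace Ω] (P : Measure Ω) [IsProbabilityMeasure P]
    (X : Ω → ℝ) (m M : ℝ) (hmM : m < M)
    (hX : ∀ᵐ ω ∂P, X ω ∈ Set.Icc m M)
    (hXint : Integrable X P)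
    (hX2int : Integrable (fun ω => (X ω) ^ 2) P)
    (f : ℝ → ℝ) (a b : ℝ) (ham : a < m) (hMb : M < b)
    (hdiff1 : ∀ x ∈ Set.Ioo a b, DifferentiableAt ℝ f x)
    (hdiff2 : ∀ x ∈ Set.Ioo a b, DifferentiableAt ℝ (deriv f) x)
    (k K : ℝ) (hk : 0 ≤ k) (hkK : k < K)
    (hbound : ∀ z ∈ Set.Icc m M, k ≤ deriv (deriv f) z ∧ deriv (deriv f) z ≤ K)
    (hfXint : Integrable (fun ω => f (X ω)) P)
    (hdfXint : Integrable (fun ω => deriv f (X ω)) P)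
    (hXdfXint : Integrable (fun ω => X ω * deriv f (X ω)) P)
     :
    K / 2 * ((M - m) ^ 2 / 12 + (∫ ω, (X ω - (m + M) / 2) ^ 2 ∂P)) ≥
      (1 / (M - m)) * (∫ z in m..M, f z) - (∫ ω, f (X ω) ∂P)
        - ((m + M) / 2) * (∫ ω, deriv f (X ω) ∂P) + (∫ ω, X ω * deriv f (X ω) ∂P) ∧
    (1 / (M - m)) * (∫ z in m..M, f z) - (∫ ω, f (X ω) ∂P)
        - ((m + M) / 2) * (∫ ω, deriv f (X ω) ∂P) + (∫ ω, X ω * deriv f (X ω) ∂P) ≥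
      k / 2 * ((M - m) ^ 2 / 12 + (∫ ω, (X ω - (m + M) / 2) ^ 2 ∂P)) :=
  stmt_13_general P X m M hmM hX hXint f a b ham hMb hdiff1 hdiff2 k K hbound hfXint hdfXint
    hXdfXint
end
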